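/- arXiv:0904.2437 — 2 statements merged into one kernel-verified Lean document; each statement's English description precedes it below -/
import Mathlib

section
/- Let t and d be integers such that the polynomial x² − t·x + d is irreducible over ℚ, let R = ℤ[α] = ℤ[X]/(X² − tX + d) with α the image of X, let A be a 2×2 integer matrix satisfying A·A − t·A + d·I = 0, and let C = [[0,1],[−d,t]] be the companion matrix. Suppose M is a 2×2 integer matrix with det(M) ≠ 0 and A·M = M·C. Define β₀ = M₀₀ + M₀₁·α and β₁ = M₁₀ + M₁₁·α in R (where the integer entries of M are mapped into R canonically). Then the ℤ-submodule N of R spanned by {β₀, β₁} is nonzero and is stable under multiplication by every element of R (so that N is a nonzero ideal of R); that is, N ≠ 0 and for all r ∈ R and all z ∈ N one has r·z ∈ N. -/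
open Polynomial

/-- The order `ℤ[α] = ℤ[X]/(X² − tX + d)` of the quadratic field `ℚ(α)`. -/
def QuadOrder (t d : ℤ) : Type :=
  AdjoinRoot ((X : ℤ[X]) ^ 2 - C t * X + C d)

noncomputable instance (t d : ℤ) : CommRing (QuadOrder t d) :=
  inferInstanceAs (CommRing (AdjoinRoot _))

/-- The root `α`, i.e. the image of `X` in `ℤ[X]/(X² − tX + d)`. -/
noncomputable def quadAlpha (t d : ℤ) : QuadOrder t d :=
  AdjoinRoot.root _

/-! Write `β = M (1, α)ᵀ`. Since `α² = tα − d`, the vector `(1, α)` is an eigenvector of the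
companion matrix `C` for the eigenvalue `α`, so `AM = MC` makes `β` an eigenvector of `A`:
`α β = A β`. Hence the `ℤ`-span of `β₀, β₁` is stable under multiplication by `α`, and therefore
by all of `ℤ[α]`. It is nonzero because `1, α` are `ℤ`-linearly independent and `M ≠ 0`. -/

open Matrix Submodule

theorem Submodule.mul_mem_of_adjoin_singleton_eq_top {R S : Type*} [CommSemiring R] [Semiring S]
    [Algebra R S] {x : S} (hx : Algebra.adjoin R {x} = ⊤) {N : Submodule R S}
    (hN : ∀ z ∈ N, x * z ∈ N) (r : S) {z : S} (hz : z ∈ N) : r * z ∈ N := by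
  have hr : r ∈ Algebra.adjoin R {x} := hx ▸ Algebra.mem_top
  induction hr using Algebra.adjoin_induction generalizing z with
  | mem y hy => exact (Set.mem_singleton_iff.mp hy) ▸ hN z hz
  | algebraMap a => rw [← Algebra.smul_def]; exact N.smul_mem a hz
  | add y w _ _ hy hw => rw [add_mul]; exact N.add_mem (hy hz) (hw hz)
  | mul y w _ _ hy hw => rw [mul_assoc]; exact hy (hw hz)

section IntMatrix

variable {S ι : Type*} [CommRing S] [Fintype ι]

theorem Matrix.mul_mem_span_range_of_smul_eq_mulVec {A : Matrix ι ι ℤ} {β : ι → S} {x : S}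
    (hβ : x • β = A.map (Int.castRingHom S) *ᵥ β) :
    ∀ z ∈ span ℤ (Set.range β), x * z ∈ span ℤ (Set.range β) := by
  suffices span ℤ (Set.range β) ≤ (span ℤ (Set.range β)).comap (LinearMap.mulLeft ℤ x) from
    fun z hz => this hz
  rw [span_le]
  rintro _ ⟨i, rfl⟩
  have hi : x * β i = ∑ j, A i j • β j := by
    simpa [mulVec, dotProduct, zsmul_eq_mul] using congrFun hβ i
  rw [SetLike.mem_coe, mem_comap, LinearMap.mulLeft_apply, hi]
  exact sum_mem fun j _ => smul_mem _ _ (subset_span ⟨j, rfl⟩)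

theorem Matrix.smul_mulVec_eq_of_mul_eq_mul {A M C : Matrix ι ι ℤ} {v : ι → S} {x : S}
    (hv : C.map (Int.castRingHom S) *ᵥ v = x • v) (hM : A * M = M * C) :
    x • (M.map (Int.castRingHom S) *ᵥ v) =
      A.map (Int.castRingHom S) *ᵥ (M.map (Int.castRingHom S) *ᵥ v) := by
  rw [mulVec_mulVec, ← Matrix.map_mul, hM, Matrix.map_mul, ← mulVec_mulVec, hv, mulVec_smul]

theorem Matrix.span_range_mulVec_ne_bot {M : Matrix ι ι ℤ} (hM : M ≠ 0) {v : ι → S}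
    (hv : LinearIndependent ℤ v) : span ℤ (Set.range (M.map (Int.castRingHom S) *ᵥ v)) ≠ ⊥ := by
  rw [Ne, span_eq_bot, Set.forall_mem_range]
  contrapose! hM
  ext i j
  refine Fintype.linearIndependent_iff.mp hv (M i) ?_ j
  simpa [mulVec, dotProduct, zsmul_eq_mul] using hM i

theorem companion_mulVec_eq_smul {t d : ℤ} {x : S} (hx : x ^ 2 - t * x + d = 0) :
    (!![0, 1; -d, t] : Matrix (Fin 2) (Fin 2) ℤ).map (Int.castRingHom S) *ᵥ ![1, x] =
      x • ![1, x] := by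
  ext i
  fin_cases i
  · simp
  · simp only [mulVec_fin_two, map_apply, of_apply, cons_val_one, cons_val_zero, Pi.smul_apply,
      smul_eq_mul, Int.coe_castRingHom]
    push_cast
    linear_combination -hx

end IntMatrix

theorem Polynomial.monic_X_sq_sub_C_mul_X_add_C {R : Type*} [CommRing R] (t d : R) :
    (X ^ 2 - C t * X + C d).Monic := by
  monicity!

theorem Polynomial.natDegree_X_sq_sub_C_mul_X_add_C {R : Type*} [CommRing R] [Nontrivial R]
    (t d : R) : (X ^ 2 - C t * X + C d).natDegree = 2 := by
  compute_degree!

theorem AdjoinRoot.linearIndependent_one_root {R : Type*} [CommRing R] {f : R[X]} (hf : f.Monic)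
    (h : 2 ≤ f.natDegree) : LinearIndependent R ![1, root f] := by
  convert (powerBasis' hf).basis.linearIndependent.comp (Fin.castLE h) (Fin.castLE_injective h)
  ext i
  fin_cases i <;> simp only [Function.comp_apply, PowerBasis.coe_basis, powerBasis'_gen]
  · exact (pow_zero (root f)).symm
  · exact (pow_one (root f)).symm

theorem quadAlpha_sq_sub_mul_add (t d : ℤ) :
    quadAlpha t d ^ 2 - t * quadAlpha t d + d = 0 := by
  have h := AdjoinRoot.eval₂_root ((X : ℤ[X]) ^ 2 - C t * X + C d)
  rwa [eval₂_add, eval₂_sub, eval₂_mul, eval₂_pow, eval₂_X, eval₂_C, eval₂_C, eq_intCast,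
    eq_intCast] at h

theorem ideal_matrix_gives_ideal_general (t d : ℤ)
    (A : Matrix (Fin 2) (Fin 2) ℤ)
    (M : Matrix (Fin 2) (Fin 2) ℤ) (hMdet : M.det ≠ 0)
    (hM : A * M = M * !![0, 1; -d, t]) :
    Submodule.span ℤ ({(M 0 0 : QuadOrder t d) + (M 0 1 : QuadOrder t d) * quadAlpha t d,
        (M 1 0 : QuadOrder t d) + (M 1 1 : QuadOrder t d) * quadAlpha t d} :
          Set (QuadOrder t d)) ≠ ⊥ ∧
    ∀ r : QuadOrder t d,
      ∀ z ∈ Submodule.span ℤ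
          ({(M 0 0 : QuadOrder t d) + (M 0 1 : QuadOrder t d) * quadAlpha t d,
            (M 1 0 : QuadOrder t d) + (M 1 1 : QuadOrder t d) * quadAlpha t d} :
              Set (QuadOrder t d)),
        r * z ∈ Submodule.span ℤ
          ({(M 0 0 : QuadOrder t d) + (M 0 1 : QuadOrder t d) * quadAlpha t d,
            (M 1 0 : QuadOrder t d) + (M 1 1 : QuadOrder t d) * quadAlpha t d} :
              Set (QuadOrder t d)) := by
  have hβ : M.map (Int.castRingHom (QuadOrder t d)) *ᵥ ![1, quadAlpha t d] =
      ![(M 0 0 : QuadOrder t d) + (M 0 1 : QuadOrder t d) * quadAlpha t d,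
        (M 1 0 : QuadOrder t d) + (M 1 1 : QuadOrder t d) * quadAlpha t d] := by
    ext i
    fin_cases i <;> simp [mulVec, dotProduct]
  have hM0 : M ≠ 0 := by
    rintro rfl
    exact hMdet det_zero
  rw [← range_cons_cons_empty, ← hβ]
  refine ⟨span_range_mulVec_ne_bot hM0 ?_, fun r z hz => ?_⟩
  · exact AdjoinRoot.linearIndependent_one_root (monic_X_sq_sub_C_mul_X_add_C t d)
      (natDegree_X_sq_sub_C_mul_X_add_C t d).ge
  · refine mul_mem_of_adjoin_singleton_eq_top AdjoinRoot.adjoinRoot_eq_top ?_ r hz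
    exact mul_mem_span_range_of_smul_eq_mulVec
      (smul_mulVec_eq_of_mul_eq_mul (companion_mulVec_eq_smul (quadAlpha_sq_sub_mul_add t d)) hM)

/-- if `x² − tx + d` is irreducible over `ℚ`, `A` is an integer matrix
with `A² − tA + dI = 0`, and `M` is an integer matrix of nonzero determinant with
`A·M = M·C` (where `C` is the companion matrix), then, setting `β₀ = M₀₀ + M₀₁·α`
and `β₁ = M₁₀ + M₁₁·α`, the ℤ-submodule of `ℤ[α]` spanned by `β₀, β₁` is nonzero and
stable under multiplication by every element of `ℤ[α]`, i.e. it is a nonzero ideal. -/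
theorem ideal_matrix_gives_ideal (t d : ℤ)
    (hirr : Irreducible ((X : ℚ[X]) ^ 2 - C (t : ℚ) * X + C (d : ℚ)))
    (A : Matrix (Fin 2) (Fin 2) ℤ)
    (hA : A * A - t • A + d • (1 : Matrix (Fin 2) (Fin 2) ℤ) = 0)
    (M : Matrix (Fin 2) (Fin 2) ℤ) (hMdet : M.det ≠ 0)
    (hM : A * M = M * !![0, 1; -d, t]) :
    Submodule.span ℤ ({(M 0 0 : QuadOrder t d) + (M 0 1 : QuadOrder t d) * quadAlpha t d,
        (M 1 0 : QuadOrder t d) + (M 1 1 : QuadOrder t d) * quadAlpha t d} :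
          Set (QuadOrder t d)) ≠ ⊥ ∧
    ∀ r : QuadOrder t d,
      ∀ z ∈ Submodule.span ℤ
          ({(M 0 0 : QuadOrder t d) + (M 0 1 : QuadOrder t d) * quadAlpha t d,
            (M 1 0 : QuadOrder t d) + (M 1 1 : QuadOrder t d) * quadAlpha t d} :
              Set (QuadOrder t d)),
        r * z ∈ Submodule.span ℤ
          ({(M 0 0 : QuadOrder t d) + (M 0 1 : QuadOrder t d) * quadAlpha t d,
            (M 1 0 : QuadOrder t d) + (M 1 1 : QuadOrder t d) * quadAlpha t d} :
              Set (QuadOrder t d)) :=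
  ideal_matrix_gives_ideal_general t d A M hMdet hM
end

section
/- Let t be an integer with t > 2, let R = ℤ[α] = ℤ[X]/(X² − tX + 1) with α the image of X. Let m₁, m₁', m₂, m₂' be positive integers with m₁·m₁' = t − 2 = m₂·m₂', gcd(m₁, m₁') = 1 and gcd(m₂, m₂') = 1. Set g = gcd(m₁, m₂) and m₃ = lcm(m₁, m₂)/gcd(m₁, m₂). Then, as ideals of R, (m₁, α−1)·(m₂, α−1) = (g)·(m₃, α−1); that is, the product of the ideals generated respectively by {m₁, α−1} and {m₂, α−1} equals the principal ideal generated by g times the ideal generated by {m₃, α−1}. -/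
open Polynomial

/-- The order `ℤ[α] = ℤ[X]/(X² − tX + 1)`. -/
def QuadOrd (t : ℤ) : Type :=
  AdjoinRoot ((X : ℤ[X]) ^ 2 - C t * X + 1)

noncomputable instance (t : ℤ) : CommRing (QuadOrd t) :=
  inferInstanceAs (CommRing (AdjoinRoot _))

/-- The root `α`, i.e. the image of `X` in `ℤ[X]/(X² − tX + 1)`. -/
noncomputable def ordAlpha (t : ℤ) : QuadOrd t :=
  AdjoinRoot.root _

/-!
Write `e = α - 1`. From `α² = tα - 1` one gets `e² = (t - 2)·α` with `α` a unit, so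
`(e²) = (t - 2)`. Expanding, `(m₁, e)(m₂, e) = (m₁m₂, m₁e, m₂e, e²) = (gcd(m₁m₂, t - 2), g·e)`,
by Bézout in `ℤ` applied to the pairs `m₁, m₂` and `m₁m₂, t - 2`. As `m₁` is prime to
`m₁' = (t - 2)/m₁`, `gcd(m₁m₂, m₁m₁') = lcm(m₁, m₂) = g·m₃`, and `(g·m₃, g·e) = (g)(m₃, e)`.
-/

theorem Nat.gcd_mul_mul_eq_lcm {m₁ m₁' m₂ : ℕ} (h₁ : 0 < m₁) (hc : m₁.Coprime m₁')
    (hm₂ : m₂ ∣ m₁ * m₁') : Nat.gcd (m₁ * m₂) (m₁ * m₁') = Nat.lcm m₁ m₂ := by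
  have hsplit : Nat.gcd m₂ m₁ * Nat.gcd m₂ m₁' = m₂ := by
    rw [← Nat.Coprime.gcd_mul m₂ hc, Nat.gcd_eq_left hm₂]
  apply Nat.eq_of_mul_eq_mul_left (Nat.gcd_pos_of_pos_left m₂ h₁)
  rw [Nat.gcd_mul_lcm, Nat.gcd_mul_left, Nat.gcd_comm m₁ m₂]
  nth_rewrite 3 [← hsplit]
  ring

namespace Ideal

variable {R : Type*} [CommRing R]

theorem span_natCast_pair_eq_span_gcd (a b : ℕ) :
    span {(a : R), (b : R)} = span {((Nat.gcd a b : ℕ) : R)} := by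
  have hℤ : span {(a : ℤ), (b : ℤ)} = span {((Nat.gcd a b : ℕ) : ℤ)} := by
    rw [← Int.gcd_natCast_natCast, Int.coe_gcd, _root_.span_gcd]
  simpa [map_span, Set.image_pair] using congrArg (map (Int.castRingHom R)) hℤ

theorem span_singleton_mul_span_pair (c a b : R) :
    span {c} * span {a, b} = span {c * a, c * b} := by
  rw [span_insert, span_insert, mul_sup, span_singleton_mul_span_singleton,
    span_singleton_mul_span_singleton]

theorem span_natCast_pair_mul_span_natCast_pair {e u : R} {n : ℕ} (hu : IsUnit u)
    (he : e * e = n * u) (m₁ m₂ : ℕ) :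
    span {(m₁ : R), e} * span {(m₂ : R), e} =
      span {((Nat.gcd (m₁ * m₂) n : ℕ) : R), (Nat.gcd m₁ m₂ : R) * e} := by
  have hsq : span {e * e} = span {(n : R)} := by
    rw [he, span_singleton_mul_right_unit hu]
  have hcross : span {(m₁ : R) * e} ⊔ span {e * (m₂ : R)} = span {(Nat.gcd m₁ m₂ : R) * e} := by
    rw [mul_comm e, ← span_singleton_mul_span_singleton, ← span_singleton_mul_span_singleton,
      ← span_singleton_mul_span_singleton, ← sup_mul, ← span_insert, span_natCast_pair_eq_span_gcd]
  rw [span_pair_mul_span_pair, span_insert, span_insert, span_insert,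
    ← sup_assoc (span {(m₁ : R) * e}), hcross, hsq, sup_left_comm, ← span_insert, ← Nat.cast_mul,
    span_natCast_pair_eq_span_gcd, span_insert (_ : R), sup_comm]

end Ideal

theorem ordAlpha_sq (t : ℤ) : ordAlpha t ^ 2 = t * ordAlpha t - 1 := by
  have h := AdjoinRoot.eval₂_root ((X : ℤ[X]) ^ 2 - C t * X + 1)
  simp only [eval₂_add, eval₂_sub, eval₂_mul, eval₂_X_pow, eval₂_X, eval₂_C, eval₂_one] at h
  rw [eq_intCast] at h
  have hrel : ordAlpha t ^ 2 - t * ordAlpha t + 1 = 0 := h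
  linear_combination hrel

theorem isUnit_ordAlpha (t : ℤ) : IsUnit (ordAlpha t) :=
  IsUnit.of_mul_eq_one (t - ordAlpha t) (by linear_combination -(ordAlpha_sq t))

theorem ordAlpha_sub_one_mul_self (t : ℤ) :
    (ordAlpha t - 1) * (ordAlpha t - 1) = (t - 2) * ordAlpha t := by
  linear_combination ordAlpha_sq t

theorem ideal_class_multiplication_formula_general (t : ℤ)
    (m₁ m₁' m₂ m₂' : ℕ)
    (h₁ : 0 < m₁)
    (hm₁ : (m₁ : ℤ) * (m₁' : ℤ) = t - 2) (hm₂ : (m₂ : ℤ) * (m₂' : ℤ) = t - 2)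
    (hc₁ : Nat.gcd m₁ m₁' = 1) :
    Ideal.span ({(m₁ : QuadOrd t), ordAlpha t - 1} : Set (QuadOrd t)) *
        Ideal.span ({(m₂ : QuadOrd t), ordAlpha t - 1} : Set (QuadOrd t)) =
      Ideal.span ({((Nat.gcd m₁ m₂ : ℕ) : QuadOrd t)} : Set (QuadOrd t)) *
        Ideal.span ({((Nat.lcm m₁ m₂ / Nat.gcd m₁ m₂ : ℕ) : QuadOrd t),
          ordAlpha t - 1} : Set (QuadOrd t)) := by
  have hsq : (ordAlpha t - 1) * (ordAlpha t - 1) = ((m₁ * m₁' : ℕ) : QuadOrd t) * ordAlpha t := by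
    have hm₁R := congrArg (Int.cast : ℤ → QuadOrd t) hm₁
    push_cast at hm₁R
    rw [ordAlpha_sub_one_mul_self, Nat.cast_mul, hm₁R]
  have hm₂_dvd : m₂ ∣ m₁ * m₁' := ⟨m₂', by exact_mod_cast hm₁.trans hm₂.symm⟩
  rw [Ideal.span_natCast_pair_mul_span_natCast_pair (isUnit_ordAlpha t) hsq,
    Nat.gcd_mul_mul_eq_lcm h₁ hc₁ hm₂_dvd, Ideal.span_singleton_mul_span_pair, ← Nat.cast_mul,
    Nat.mul_div_cancel' ((Nat.gcd_dvd_left m₁ m₂).trans (Nat.dvd_lcm_left m₁ m₂))]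

/-- for `t > 2` and positive integers `m₁, m₁', m₂, m₂'` with
`m₁·m₁' = t − 2 = m₂·m₂'`, `gcd(m₁, m₁') = 1` and `gcd(m₂, m₂') = 1`, setting
`g = gcd(m₁, m₂)` and `m₃ = lcm(m₁, m₂)/gcd(m₁, m₂)`, one has
`(m₁, α−1)·(m₂, α−1) = (g)·(m₃, α−1)` as ideals of `ℤ[α] = ℤ[X]/(X² − tX + 1)`. -/
theorem ideal_class_multiplication_formula (t : ℤ) (ht : 2 < t)
    (m₁ m₁' m₂ m₂' : ℕ)
    (h₁ : 0 < m₁) (h₁' : 0 < m₁') (h₂ : 0 < m₂) (h₂' : 0 < m₂')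
    (hm₁ : (m₁ : ℤ) * (m₁' : ℤ) = t - 2) (hm₂ : (m₂ : ℤ) * (m₂' : ℤ) = t - 2)
    (hc₁ : Nat.gcd m₁ m₁' = 1) (hc₂ : Nat.gcd m₂ m₂' = 1) :
    Ideal.span ({(m₁ : QuadOrd t), ordAlpha t - 1} : Set (QuadOrd t)) *
        Ideal.span ({(m₂ : QuadOrd t), ordAlpha t - 1} : Set (QuadOrd t)) =
      Ideal.span ({((Nat.gcd m₁ m₂ : ℕ) : QuadOrd t)} : Set (QuadOrd t)) *
        Ideal.span ({((Nat.lcm m₁ m₂ / Nat.gcd m₁ m₂ : ℕ) : QuadOrd t),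
          ordAlpha t - 1} : Set (QuadOrd t)) :=
  ideal_class_multiplication_formula_general t m₁ m₁' m₂ m₂' h₁ hm₁ hm₂ hc₁
end
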